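/- (Theorem 4.1) Consider the island Feynman-Kac model on the product spaces X_n^{N1} built from the ε-bootstrap particle kernels boldM_{n+1}(x, dy) = ∏_{i=1}^{N1} (S_{n,m(x)} M_{n+1})(x^i, dy^i) (where m(x) is the empirical measure of x), the potentials boldG_n(x) = N1^{-1} Σ_{i=1}^{N1} G_n(x^i), and initial distribution η_0^{⊗N1}: its unnormalized measures are boldΓ_n(F) = E[F(ξ_n) ∏_{0≤p<n} boldG_p(ξ_p)] and boldη_n = boldΓ_n / boldΓ_n(1), for the Markov chain (ξ_n) with these transitions and initial law. Then for any bounded measurable f on X_n and F(x) = N1^{-1} Σ_{i=1}^{N1} f(x^i), one has boldΓ_n(F) = γ_n(f) and boldη_n(F) = η_n(f). -/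

import Mathlib

/-!
The ε-bootstrap step is unbiased for the Feynman-Kac recursion. For a configuration `x` with
empirical measure `m = m(x)`, averaging the ε-selection over `m` gives `m S_m = Ψ(m)`: the mass
`ε G(x^i)` kept on the particle itself is exactly compensated by the reduced mass sent to `Ψ(m)`.
Hence `boldG(x) · boldM(F_f)(x) = m(G) · Ψ(m)(M f) = m(G · M f) = F_{G · M f}(x)`, and the Markov
property of `ξ` turns this into `boldΓ_{n+1}(F_f) = boldΓ_n(F_{G_n · M_{n+1} f})`, the recursion
that defines `γ_{n+1}(f) = γ_n(G_n · M_{n+1} f)`. Induction on `n` gives `boldΓ_n(F_f) = γ_n(f)`,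
and `f = 1` identifies the normalizing constants.
-/

open MeasureTheory ProbabilityTheory Filter Finset
open scoped ENNReal NNReal Topology Classical

noncomputable section

namespace FKisland

/-- Unnormalized Feynman-Kac measures `γ_n`:
`γ_0 = init` and `γ_{n+1}(f) = γ_n (G_n ⋅ step_{n+1} f)`. -/
def gammaSeq {S : ℕ → Type*} [∀ n, MeasurableSpace (S n)]
    (init : Measure (S 0)) (step : ∀ n, S n → Measure (S (n + 1)))
    (G : ∀ n, S n → ℝ) : (n : ℕ) → Measure (S n)
  | 0 => init
  | n + 1 => ((gammaSeq init step G n).withDensity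
      (fun x => ENNReal.ofReal (G n x))).bind (step n)

/-- Normalized Feynman-Kac measures `η_n = γ_n / γ_n(1)`. -/
def etaSeq {S : ℕ → Type*} [∀ n, MeasurableSpace (S n)]
    (init : Measure (S 0)) (step : ∀ n, S n → Measure (S (n + 1)))
    (G : ∀ n, S n → ℝ) (n : ℕ) : Measure (S n) :=
  (gammaSeq init step G n Set.univ)⁻¹ • gammaSeq init step G n

/-- Feynman-Kac semigroup `Q_{p,p+k} = Q_{p+1} Q_{p+2} ⋯ Q_{p+k}` acting on functions,
where `Q_{l+1} g (x) = G_l(x) ∫ g(y) step_l(x,dy)`. -/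
def Qop {S : ℕ → Type*} [∀ n, MeasurableSpace (S n)]
    (step : ∀ n, S n → Measure (S (n + 1))) (G : ∀ n, S n → ℝ) :
    (p k : ℕ) → (S (p + k) → ℝ) → S p → ℝ
  | _, 0, f => f
  | p, k + 1, f => Qop step G p k (fun x => G (p + k) x * ∫ y, f y ∂(step (p + k) x))

/-- `Q_{p,n}` for `p ≤ n`. -/
def Qle {S : ℕ → Type*} [∀ n, MeasurableSpace (S n)]
    (step : ∀ n, S n → Measure (S (n + 1))) (G : ∀ n, S n → ℝ)
    {p n : ℕ} (h : p ≤ n) (f : S n → ℝ) : S p → ℝ :=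
  Qop step G p (n - p) (fun y => f (cast (congrArg S (Nat.add_sub_cancel' h)) y))

/-- Normalized semigroup `Q̄_{p,p+k} = Q_{p,p+k} / η_p(Q_{p,p+k} 1)`. -/
def Qbar {S : ℕ → Type*} [∀ n, MeasurableSpace (S n)]
    (init : Measure (S 0)) (step : ∀ n, S n → Measure (S (n + 1)))
    (G : ∀ n, S n → ℝ) (p k : ℕ) (f : S (p + k) → ℝ) : S p → ℝ :=
  fun x => Qop step G p k f x /
    ∫ z, Qop step G p k (fun _ => (1 : ℝ)) z ∂(etaSeq init step G p)

/-- Normalized semigroup `Q̄_{p,n}` for `p ≤ n`. -/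
def Qbarle {S : ℕ → Type*} [∀ n, MeasurableSpace (S n)]
    (init : Measure (S 0)) (step : ∀ n, S n → Measure (S (n + 1)))
    (G : ∀ n, S n → ℝ) {p n : ℕ} (h : p ≤ n) (f : S n → ℝ) : S p → ℝ :=
  fun x => Qle step G h f x /
    ∫ z, Qle step G h (fun _ => (1 : ℝ)) z ∂(etaSeq init step G p)

/-- Boltzmann-Gibbs transformation `Ψ(μ)(dx) = G(x) μ(dx) / μ(G)`. -/
def boltzmannGibbs {α : Type*} [MeasurableSpace α] (G : α → ℝ) (μ : Measure α) :
    Measure α :=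
  (∫⁻ x, ENNReal.ofReal (G x) ∂μ)⁻¹ • μ.withDensity fun x => ENNReal.ofReal (G x)

/-- One bootstrap selection/mutation step (`boldM_{n+1}`): each of the `N` new particles is
drawn independently from the mixture `Σ_j G(x^j) M(x^j, ⋅) / Σ_k G(x^k)`. -/
def bootStep {α β : Type*} [MeasurableSpace α] [MeasurableSpace β]
    (M : α → Measure β) (G : α → ℝ) {N : ℕ} (x : Fin N → α) :
    Measure (Fin N → β) :=
  Measure.pi fun _ : Fin N =>
    (∑ k, ENNReal.ofReal (G (x k)))⁻¹ • ∑ j, ENNReal.ofReal (G (x j)) • M (x j)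

/-- ε-bootstrap selection kernel
`S_{n,μ}(x, ⋅) = ε G(x) δ_x + (1 - ε G(x)) Ψ(μ)`. -/
def epsSelect {α : Type*} [MeasurableSpace α]
    (G : α → ℝ) (ε : ℝ) (μ : Measure α) (x : α) : Measure α :=
  ENNReal.ofReal (ε * G x) • Measure.dirac x
    + ENNReal.ofReal (1 - ε * G x) • boltzmannGibbs G μ

/-- Empirical measure of a configuration. -/
def empMeasure {α : Type*} [MeasurableSpace α] {N : ℕ} (x : Fin N → α) : Measure α :=
  (N : ℝ≥0∞)⁻¹ • ∑ i, Measure.dirac (x i)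

/-- One ε-bootstrap particle step: coordinate `i` moves with `S_{n, m(x)} M` started at `x^i`. -/
def epsBootStep {α β : Type*} [MeasurableSpace α] [MeasurableSpace β]
    (M : α → Measure β) (G : α → ℝ) (ε : ℝ) {N : ℕ} (x : Fin N → α) :
    Measure (Fin N → β) :=
  Measure.pi fun i : Fin N => (epsSelect G ε (empMeasure x) (x i)).bind M

/-- One ESS particle step on weighted configurations: if the effective sample size
`(Σ w G)² / Σ (wG)²` is at least `a N`, keep the particles (mutating them) and multiply the
weights by the potential; otherwise resample multinomially and reset all weights to 1. -/
def essStep {α β : Type*} [MeasurableSpace α] [MeasurableSpace β]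
    (M : α → Measure β) (G : α → ℝ) (a : ℝ) {N : ℕ} (xw : Fin N → α × ℝ) :
    Measure (Fin N → β × ℝ) :=
  if (∑ i, (xw i).2 * G (xw i).1) ^ 2 / (∑ i, ((xw i).2 * G (xw i).1) ^ 2) ≥ a * N then
    Measure.pi fun i : Fin N => (M (xw i).1).map fun y => (y, (xw i).2 * G (xw i).1)
  else
    Measure.pi fun _ : Fin N =>
      ((∑ k, ENNReal.ofReal ((xw k).2 * G (xw k).1))⁻¹ •
          ∑ j, ENNReal.ofReal ((xw j).2 * G (xw j).1) • M (xw j).1).map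
        fun y => (y, (1 : ℝ))

/-- The process `ξ` on the time-varying state spaces `S n` is a Markov chain with initial
law `init` and transition steps `step`, characterized through products of bounded
measurable functionals of the path. -/
def IsMarkovApprox {Ω : Type*} [MeasurableSpace Ω] (P : Measure Ω)
    {S : ℕ → Type*} [∀ n, MeasurableSpace (S n)]
    (init : Measure (S 0)) (step : ∀ n, S n → Measure (S (n + 1)))
    (ξ : ∀ n, Ω → S n) : Prop :=
  (∀ n, Measurable (ξ n)) ∧
  P.map (ξ 0) = init ∧
  ∀ (n : ℕ) (F : ∀ p, S p → ℝ),
    (∀ p, Measurable (F p)) → (∀ p, ∃ C, ∀ x, |F p x| ≤ C) →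
    ∀ (H : S (n + 1) → ℝ), Measurable H → (∃ C, ∀ x, |H x| ≤ C) →
      ∫ ω, (∏ p ∈ Finset.range (n + 1), F p (ξ p ω)) * H (ξ (n + 1) ω) ∂P
        = ∫ ω, (∏ p ∈ Finset.range (n + 1), F p (ξ p ω)) *
            ∫ y, H y ∂(step n (ξ n ω)) ∂P

/-- Bootstrap local sampling errors `W_p^{N1}` along a configuration path `ξ`:
`W_0^{N1}(g) = √N1 (η_0^{N1}(g) - η_0(g))` and for `p ≥ 1`,
`W_p^{N1}(g) = √N1 (η_p^{N1}(g) - Φ_p(η_{p-1}^{N1})(g))` with `Φ_p(μ) = Ψ_{p-1}(μ) M_p`. -/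
def localW {X : ℕ → Type*} [∀ n, MeasurableSpace (X n)]
    (η0 : Measure (X 0)) (M : ∀ n, Kernel (X n) (X (n + 1))) (G : ∀ n, X n → ℝ)
    (N1 : ℕ) (ξ : ∀ p, Fin N1 → X p) : (p : ℕ) → (X p → ℝ) → ℝ
  | 0, g => Real.sqrt N1 * (((N1 : ℝ)⁻¹ * ∑ i, g (ξ 0 i)) - ∫ x, g x ∂η0)
  | p + 1, g => Real.sqrt N1 * (((N1 : ℝ)⁻¹ * ∑ i, g (ξ (p + 1) i))
      - (∑ i, G p (ξ p i) * ∫ y, g y ∂(M p (ξ p i))) / ∑ i, G p (ξ p i))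

end FKisland

open FKisland

namespace FKisland

lemma abs_avg_le {α : Type*} {N : ℕ} (hN : N ≠ 0) {f : α → ℝ} {D : ℝ} (hb : ∀ x, |f x| ≤ D)
    (x : Fin N → α) : |(N : ℝ)⁻¹ * ∑ i, f (x i)| ≤ D := by
  have hsum : |∑ i, f (x i)| ≤ N * D := by
    simpa using (abs_sum_le_sum_abs _ _).trans (sum_le_card_nsmul univ _ D fun i _ => hb (x i))
  rw [abs_mul, abs_inv, Nat.abs_cast, inv_mul_le_iff₀ (by positivity)]
  exact hsum

section MeasureLemmas

variable {α β : Type*} [MeasurableSpace α] [MeasurableSpace β]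

lemma integrable_of_abs_le {μ : Measure α} [IsFiniteMeasure μ] {f : α → ℝ} (hf : Measurable f)
    {D : ℝ} (hb : ∀ x, |f x| ≤ D) : Integrable f μ :=
  .of_bound hf.aestronglyMeasurable D (.of_forall fun x => (hb x).trans_eq' (Real.norm_eq_abs _))

lemma abs_integral_le_of_abs_le {μ : Measure α} [IsProbabilityMeasure μ] {f : α → ℝ} {D : ℝ}
    (hb : ∀ x, |f x| ≤ D) : |∫ x, f x ∂μ| ≤ D := by
  simpa using norm_integral_le_of_norm_le_const (μ := μ) (f := f)
    (.of_forall fun x => (hb x).trans_eq' (Real.norm_eq_abs _))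

lemma integral_bind_kernel {μ : Measure α} [SFinite μ] {κ : Kernel α β} [IsSFiniteKernel κ]
    {f : β → ℝ} (hf : Integrable f (κ ∘ₘ μ)) :
    ∫ y, f y ∂(κ ∘ₘ μ) = ∫ a, ∫ y, f y ∂(κ a) ∂μ := by
  rw [← Measure.snd_compProd, Measure.snd, integral_map measurable_snd.aemeasurable
      (by rw [← Measure.snd, Measure.snd_compProd]; exact hf.1),
    Measure.integral_compProd ((Measure.integrable_compProd_snd_iff hf.1).2 hf)]

lemma integral_avg_pi {N : ℕ} (ν : Fin N → Measure α) [∀ i, IsProbabilityMeasure (ν i)]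
    {f : α → ℝ} (hf : ∀ i, Integrable f (ν i)) :
    ∫ y, (N : ℝ)⁻¹ * ∑ i, f (y i) ∂(Measure.pi ν) = (N : ℝ)⁻¹ * ∑ i, ∫ z, f z ∂(ν i) := by
  have heval (i : Fin N) : (Measure.pi ν).map (Function.eval i) = ν i :=
    (measurePreserving_eval ν i).map_eq
  rw [integral_const_mul, integral_finsetSum _ fun i _ =>
    ((heval i).symm ▸ hf i).comp_measurable (measurable_pi_apply i)]
  congr 1
  refine sum_congr rfl fun i _ => ?_
  rw [← integral_map (measurable_pi_apply i).aemeasurable (by rw [heval]; exact (hf i).1), heval]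

lemma isFiniteMeasure_withDensity_of_le {μ : Measure α} [IsFiniteMeasure μ] {g : α → ℝ} {c : ℝ}
    (hgc : ∀ x, g x ≤ c) :
    IsFiniteMeasure (μ.withDensity fun x => ENNReal.ofReal (g x)) := by
  refine isFiniteMeasure_withDensity (ne_top_of_le_ne_top ?_
    (lintegral_mono fun x => ENNReal.ofReal_le_ofReal (hgc x)))
  simp [lintegral_const, ENNReal.mul_ne_top, measure_ne_top]

end MeasureLemmas

section Selection

variable {α : Type*} [MeasurableSpace α] {G : α → ℝ} {μ : Measure α}

lemma integral_empMeasure {N : ℕ} (x : Fin N → α) {h : α → ℝ} (hh : Measurable h) :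
    ∫ z, h z ∂(empMeasure x) = (N : ℝ)⁻¹ * ∑ j, h (x j) := by
  rw [empMeasure, integral_smul_measure, integral_finsetSum_measure fun i _ =>
    integrable_dirac' hh.stronglyMeasurable enorm_lt_top]
  simp [integral_dirac' _ _ hh.stronglyMeasurable]

lemma integral_boltzmannGibbs (hG : Measurable G) (hG0 : ∀ x, 0 ≤ G x) (g : α → ℝ) :
    ∫ z, g z ∂(boltzmannGibbs G μ) = (∫ z, G z * g z ∂μ) / ∫ z, G z ∂μ := by
  rw [boltzmannGibbs, integral_smul_measure, integral_withDensity_eq_integral_toReal_smul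
      hG.ennreal_ofReal (.of_forall fun _ => ENNReal.ofReal_lt_top),
    integral_eq_lintegral_of_nonneg_ae (.of_forall hG0) hG.aestronglyMeasurable,
    ENNReal.toReal_inv, smul_eq_mul, inv_mul_eq_div]
  simp_rw [ENNReal.toReal_ofReal (hG0 _), smul_eq_mul]

lemma isProbabilityMeasure_boltzmannGibbs (hG0 : ∀ x, 0 ≤ G x)
    (hpos : 0 < ∫ z, G z ∂μ) : IsProbabilityMeasure (boltzmannGibbs G μ) := by
  have hint : Integrable G μ := by
    by_contra h
    rw [integral_undef h] at hpos
    exact hpos.false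
  have hlint : ∫⁻ z, ENNReal.ofReal (G z) ∂μ = ENNReal.ofReal (∫ z, G z ∂μ) :=
    (ofReal_integral_eq_lintegral_ofReal hint (.of_forall hG0)).symm
  constructor
  rw [boltzmannGibbs, Measure.smul_apply, withDensity_apply _ MeasurableSet.univ,
    Measure.restrict_univ, smul_eq_mul, hlint]
  exact ENNReal.inv_mul_cancel (ENNReal.ofReal_pos.2 hpos).ne' ENNReal.ofReal_ne_top

variable {ε : ℝ} {y : α}

lemma isProbabilityMeasure_epsSelect [IsProbabilityMeasure (boltzmannGibbs G μ)]
    (h0 : 0 ≤ ε * G y) (h1 : ε * G y ≤ 1) : IsProbabilityMeasure (epsSelect G ε μ y) := by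
  constructor
  simp only [epsSelect, Measure.add_apply, Measure.smul_apply, measure_univ, smul_eq_mul, mul_one]
  rw [← ENNReal.ofReal_add h0 (by linarith), add_sub_cancel, ENNReal.ofReal_one]

lemma integral_epsSelect (h0 : 0 ≤ ε * G y) (h1 : ε * G y ≤ 1) {g : α → ℝ} (hg : Measurable g)
    (hgi : Integrable g (boltzmannGibbs G μ)) :
    ∫ z, g z ∂(epsSelect G ε μ y)
      = ε * G y * g y + (1 - ε * G y) * ∫ z, g z ∂(boltzmannGibbs G μ) := by
  rw [epsSelect, integral_add_measure
      ((integrable_dirac' hg.stronglyMeasurable enorm_lt_top).smul_measure ENNReal.ofReal_ne_top)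
      (hgi.smul_measure ENNReal.ofReal_ne_top),
    integral_smul_measure, integral_smul_measure, integral_dirac' _ _ hg.stronglyMeasurable,
    ENNReal.toReal_ofReal h0, ENNReal.toReal_ofReal (by linarith), smul_eq_mul, smul_eq_mul]

variable {c : ℝ}

lemma integral_integral_epsSelect [IsProbabilityMeasure μ] (hG : Measurable G)
    (hG0 : ∀ x, 0 ≤ G x) (hGc : ∀ x, G x ≤ c) (hpos : 0 < ∫ z, G z ∂μ)
    (hε : 0 ≤ ε) (hεc : ε * c ≤ 1) {g : α → ℝ} (hg : Measurable g) {D : ℝ}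
    (hb : ∀ x, |g x| ≤ D) :
    ∫ x, ∫ z, g z ∂(epsSelect G ε μ x) ∂μ = ∫ z, g z ∂(boltzmannGibbs G μ) := by
  have := isProbabilityMeasure_boltzmannGibbs hG0 hpos
  set m := ∫ z, g z ∂(boltzmannGibbs G μ)
  have hGi : Integrable G μ :=
    integrable_of_abs_le hG fun x => (abs_of_nonneg (hG0 x)).trans_le (hGc x)
  have hGgi : Integrable (fun x => G x * g x) μ :=
    hGi.mul_bdd hg.aestronglyMeasurable (.of_forall fun x => (hb x).trans_eq' (Real.norm_eq_abs _))
  have hm : m * ∫ z, G z ∂μ = ∫ z, G z * g z ∂μ := by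
    rw [show m = _ from integral_boltzmannGibbs hG hG0 g, div_mul_cancel₀ _ hpos.ne']
  calc ∫ x, ∫ z, g z ∂(epsSelect G ε μ x) ∂μ
      = ∫ x, m + ε * (G x * g x - m * G x) ∂μ := by
        refine integral_congr_ae (.of_forall fun x => ?_)
        have h0 : 0 ≤ ε * G x := mul_nonneg hε (hG0 x)
        have h1 : ε * G x ≤ 1 := (mul_le_mul_of_nonneg_left (hGc x) hε).trans hεc
        dsimp only
        rw [integral_epsSelect h0 h1 hg (integrable_of_abs_le hg hb)]
        ring
    _ = m + ε * ((∫ z, G z * g z ∂μ) - m * ∫ z, G z ∂μ) := by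
        have hdiff : Integrable (fun x => G x * g x - m * G x) μ := hGgi.sub (hGi.const_mul m)
        rw [integral_add (integrable_const m) (hdiff.const_mul ε), integral_const,
          integral_const_mul, integral_sub hGgi (hGi.const_mul m), integral_const_mul]
        simp
    _ = m := by rw [hm]; ring

lemma isProbabilityMeasure_empMeasure {N : ℕ} (hN : N ≠ 0) (x : Fin N → α) :
    IsProbabilityMeasure (empMeasure x) := by
  constructor
  simp only [empMeasure, Measure.smul_apply, Measure.coe_finsetSum, Finset.sum_apply,
    measure_univ, sum_const, card_univ, Fintype.card_fin, nsmul_eq_mul, mul_one, smul_eq_mul]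
  exact ENNReal.inv_mul_cancel (by simpa) (by simp)

lemma integral_empMeasure_pos {N : ℕ} (hN : N ≠ 0) (hG : Measurable G) (hGpos : ∀ x, 0 < G x)
    (x : Fin N → α) : 0 < ∫ z, G z ∂(empMeasure x) := by
  rw [integral_empMeasure x hG]
  exact mul_pos (by positivity) (sum_pos (fun i _ => hGpos (x i)) ⟨⟨0, by omega⟩, mem_univ _⟩)

lemma isProbabilityMeasure_epsSelect_empMeasure {N : ℕ} (hN : N ≠ 0) (hG : Measurable G)
    (hGpos : ∀ x, 0 < G x) (hGc : ∀ x, G x ≤ c) (hε : 0 ≤ ε) (hεc : ε * c ≤ 1)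
    (x : Fin N → α) (y : α) : IsProbabilityMeasure (epsSelect G ε (empMeasure x) y) :=
  have := isProbabilityMeasure_boltzmannGibbs (fun y => (hGpos y).le)
    (integral_empMeasure_pos hN hG hGpos x)
  isProbabilityMeasure_epsSelect (mul_nonneg hε (hGpos y).le)
    ((mul_le_mul_of_nonneg_left (hGc y) hε).trans hεc)

lemma avg_integral_epsSelect_empMeasure {N : ℕ} (hN : N ≠ 0) (hG : Measurable G)
    (hGpos : ∀ x, 0 < G x) (hGc : ∀ x, G x ≤ c) (hε : 0 ≤ ε) (hεc : ε * c ≤ 1)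
    {g : α → ℝ} (hg : Measurable g) {D : ℝ} (hb : ∀ x, |g x| ≤ D) (x : Fin N → α) :
    (N : ℝ)⁻¹ * ∑ i, ∫ z, g z ∂(epsSelect G ε (empMeasure x) (x i))
      = ∫ z, g z ∂(boltzmannGibbs G (empMeasure x)) := by
  have := isProbabilityMeasure_empMeasure hN x
  have hpos := integral_empMeasure_pos hN hG hGpos x
  have := isProbabilityMeasure_boltzmannGibbs (fun y => (hGpos y).le) hpos
  have hmeas : Measurable fun y => ∫ z, g z ∂(epsSelect G ε (empMeasure x) y) := by
    have hformula : (fun y => ∫ z, g z ∂(epsSelect G ε (empMeasure x) y)) = fun y =>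
        ε * G y * g y + (1 - ε * G y) * ∫ z, g z ∂(boltzmannGibbs G (empMeasure x)) :=
      funext fun y => integral_epsSelect (mul_nonneg hε (hGpos y).le)
        ((mul_le_mul_of_nonneg_left (hGc y) hε).trans hεc) hg (integrable_of_abs_le hg hb)
    rw [hformula]
    fun_prop
  rw [← integral_empMeasure x hmeas]
  exact integral_integral_epsSelect hG (fun y => (hGpos y).le) hGc hpos hε hεc hg hb

lemma avg_mul_integral_avg_epsBootStep {β : Type*} [MeasurableSpace β] {N : ℕ} (hN : N ≠ 0)
    (κ : Kernel α β) [IsMarkovKernel κ] (hG : Measurable G) (hGpos : ∀ x, 0 < G x)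
    (hGc : ∀ x, G x ≤ c) (hε : 0 ≤ ε) (hεc : ε * c ≤ 1) {f : β → ℝ} (hf : Measurable f)
    {D : ℝ} (hb : ∀ y, |f y| ≤ D) (x : Fin N → α) :
    ((N : ℝ)⁻¹ * ∑ i, G (x i)) *
        ∫ y, (N : ℝ)⁻¹ * ∑ i, f (y i) ∂(epsBootStep (fun a => κ a) G ε x)
      = (N : ℝ)⁻¹ * ∑ i, G (x i) * ∫ z, f z ∂(κ (x i)) := by
  have := isProbabilityMeasure_epsSelect_empMeasure hN hG hGpos hGc hε hεc x
  have hκf : Measurable fun a => ∫ z, f z ∂(κ a) :=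
    (hf.stronglyMeasurable.integral_kernel (κ := κ)).measurable
  have hκb (a : α) : |∫ z, f z ∂(κ a)| ≤ D := abs_integral_le_of_abs_le hb
  have hpos := integral_empMeasure_pos hN hG hGpos x
  have hbind (i : Fin N) : ∫ z, f z ∂(κ ∘ₘ epsSelect G ε (empMeasure x) (x i))
      = ∫ a, ∫ z, f z ∂(κ a) ∂(epsSelect G ε (empMeasure x) (x i)) :=
    integral_bind_kernel (integrable_of_abs_le hf hb)
  rw [epsBootStep, integral_avg_pi _ fun i => integrable_of_abs_le hf hb]
  simp_rw [hbind]
  rw [avg_integral_epsSelect_empMeasure hN hG hGpos hGc hε hεc hκf hκb,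
    integral_boltzmannGibbs hG (fun y => (hGpos y).le), ← integral_empMeasure x hG,
    mul_div_cancel₀ _ hpos.ne']
  exact integral_empMeasure x (hG.mul hκf)

end Selection

section FeynmanKac

variable {S : ℕ → Type*} [∀ n, MeasurableSpace (S n)] (init : Measure (S 0))
  (step : ∀ n, Kernel (S n) (S (n + 1))) {G : ∀ n, S n → ℝ}

lemma integral_etaSeq (n : ℕ) (f : S n → ℝ) :
    ∫ x, f x ∂(etaSeq init (fun k x => step k x) G n)
      = (∫ x, f x ∂(gammaSeq init (fun k x => step k x) G n))
        / (gammaSeq init (fun k x => step k x) G n).real Set.univ := by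
  rw [etaSeq, integral_smul_measure, ENNReal.toReal_inv, smul_eq_mul, inv_mul_eq_div]
  rfl

variable [IsFiniteMeasure init] [∀ n, IsFiniteKernel (step n)] {C : ℕ → ℝ}

lemma isFiniteMeasure_gammaSeq (hGle : ∀ n x, G n x ≤ C n) (n : ℕ) :
    IsFiniteMeasure (gammaSeq init (fun k x => step k x) G n) := by
  induction n with
  | zero => exact ‹IsFiniteMeasure init›
  | succ n ih =>
    have := isFiniteMeasure_withDensity_of_le (μ := gammaSeq init (fun k x => step k x) G n)
      (hGle n)
    exact inferInstanceAs (IsFiniteMeasure (step n ∘ₘ _))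

lemma integral_gammaSeq_succ (hGmeas : ∀ n, Measurable (G n)) (hG0 : ∀ n x, 0 ≤ G n x)
    (hGle : ∀ n x, G n x ≤ C n) (n : ℕ) {f : S (n + 1) → ℝ} (hf : Measurable f) {D : ℝ}
    (hb : ∀ x, |f x| ≤ D) :
    ∫ y, f y ∂(gammaSeq init (fun k x => step k x) G (n + 1))
      = ∫ x, G n x * ∫ y, f y ∂(step n x) ∂(gammaSeq init (fun k x => step k x) G n) := by
  have := isFiniteMeasure_gammaSeq init step hGle n
  have := isFiniteMeasure_withDensity_of_le (μ := gammaSeq init (fun k x => step k x) G n)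
    (hGle n)
  change ∫ y, f y ∂(step n ∘ₘ _) = _
  rw [integral_bind_kernel (integrable_of_abs_le hf hb),
    integral_withDensity_eq_integral_toReal_smul (hGmeas n).ennreal_ofReal
      (.of_forall fun _ => ENNReal.ofReal_lt_top)]
  simp_rw [ENNReal.toReal_ofReal (hG0 n _), smul_eq_mul]

end FeynmanKac

section IslandModel

variable {X : ℕ → Type*} [∀ n, MeasurableSpace (X n)] {η0 : Measure (X 0)}
  [IsProbabilityMeasure η0] {M : ∀ n, Kernel (X n) (X (n + 1))} [∀ n, IsMarkovKernel (M n)]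
  {G : ∀ n, X n → ℝ} {C ε : ℕ → ℝ} {Ω : Type*} [MeasurableSpace Ω] {P : Measure Ω} {N : ℕ}
  {ξ : ∀ p, Ω → (Fin N → X p)}

theorem integral_avg_mul_prod_avg_eq_integral_gammaSeq (hN : N ≠ 0)
    (hGmeas : ∀ n, Measurable (G n)) (hGpos : ∀ n x, 0 < G n x) (hGle : ∀ n x, G n x ≤ C n)
    (hε : ∀ n, 0 ≤ ε n) (hεC : ∀ n, ε n * C n ≤ 1)
    (hchain : IsMarkovApprox (S := fun p => Fin N → X p) P (Measure.pi fun _ : Fin N => η0)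
      (fun k x => epsBootStep (fun a => M k a) (G k) (ε k) x) ξ)
    (n : ℕ) {f : X n → ℝ} (hf : Measurable f) {D : ℝ} (hb : ∀ x, |f x| ≤ D) :
    ∫ ω, ((N : ℝ)⁻¹ * ∑ i, f (ξ n ω i)) *
        ∏ p ∈ range n, ((N : ℝ)⁻¹ * ∑ i, G p (ξ p ω i)) ∂P
      = ∫ x, f x ∂(gammaSeq η0 (fun k x => M k x) G n) := by
  obtain ⟨hξ, hinit, hstep⟩ := hchain
  induction n generalizing D with
  | zero =>
    have hF : Measurable fun x : Fin N → X 0 => (N : ℝ)⁻¹ * ∑ i, f (x i) := by fun_prop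
    rw [range_zero]
    simp_rw [prod_empty, mul_one]
    rw [← integral_map (hξ 0).aemeasurable hF.aestronglyMeasurable, hinit,
      integral_avg_pi _ fun _ => integrable_of_abs_le hf hb, sum_const, card_univ,
      Fintype.card_fin, nsmul_eq_mul, inv_mul_cancel_left₀ (Nat.cast_ne_zero.2 hN)]
    rfl
  | succ n ih =>
    have hMf : Measurable fun x => ∫ y, f y ∂(M n x) :=
      (hf.stronglyMeasurable.integral_kernel (κ := M n)).measurable
    have hGMf (x : X n) : |G n x * ∫ y, f y ∂(M n x)| ≤ C n * D := by
      rw [abs_mul, abs_of_pos (hGpos n x)]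
      exact mul_le_mul (hGle n x) (abs_integral_le_of_abs_le hb) (abs_nonneg _)
        ((hGpos n x).le.trans (hGle n x))
    have hGavg (p : ℕ) : Measurable fun x : Fin N → X p => (N : ℝ)⁻¹ * ∑ i, G p (x i) := by
      have := hGmeas p
      fun_prop
    have hGb (p : ℕ) (x : X p) : |G p x| ≤ C p := (abs_of_pos (hGpos p x)).trans_le (hGle p x)
    calc _ = ∫ ω, (∏ p ∈ range (n + 1), ((N : ℝ)⁻¹ * ∑ i, G p (ξ p ω i))) *
            ((N : ℝ)⁻¹ * ∑ i, f (ξ (n + 1) ω i)) ∂P :=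
          integral_congr_ae (.of_forall fun ω => mul_comm _ _)
      _ = ∫ ω, (∏ p ∈ range (n + 1), ((N : ℝ)⁻¹ * ∑ i, G p (ξ p ω i))) *
            ∫ y, (N : ℝ)⁻¹ * ∑ i, f (y i)
              ∂(epsBootStep (fun a => M n a) (G n) (ε n) (ξ n ω)) ∂P :=
          hstep n _ hGavg (fun p => ⟨C p, abs_avg_le hN (hGb p)⟩) _ (by fun_prop)
            ⟨D, abs_avg_le hN hb⟩
      _ = ∫ ω, ((N : ℝ)⁻¹ * ∑ i, G n (ξ n ω i) * ∫ y, f y ∂(M n (ξ n ω i))) *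
            ∏ p ∈ range n, ((N : ℝ)⁻¹ * ∑ i, G p (ξ p ω i)) ∂P := by
          refine integral_congr_ae (.of_forall fun ω => ?_)
          dsimp only
          rw [prod_range_succ, ← avg_mul_integral_avg_epsBootStep hN (M n) (hGmeas n) (hGpos n)
            (hGle n) (hε n) (hεC n) hf hb (ξ n ω)]
          ring
      _ = ∫ x, G n x * ∫ y, f y ∂(M n x) ∂(gammaSeq η0 (fun k x => M k x) G n) :=
          ih ((hGmeas n).mul hMf) hGMf
      _ = _ := (integral_gammaSeq_succ η0 M hGmeas (fun n x => (hGpos n x).le) hGle n hf hb).symm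

end IslandModel

end FKisland

theorem statement9_general {X : ℕ → Type*} [∀ n, MeasurableSpace (X n)]
    (η0 : Measure (X 0)) [IsProbabilityMeasure η0]
    (M : ∀ n, Kernel (X n) (X (n + 1))) [∀ n, IsMarkovKernel (M n)]
    (G : ∀ n, X n → ℝ)
    (hGmeas : ∀ n, Measurable (G n))
    (hGpos : ∀ n x, 0 < G n x)
    (C : ℕ → ℝ) (hGle : ∀ n x, G n x ≤ C n)
    (ε : ℕ → ℝ) (hε : ∀ n, 0 ≤ ε n) (hεC : ∀ n, ε n * C n ≤ 1)
    {Ω : Type*} [MeasurableSpace Ω] (P : Measure Ω)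
    {N1 : ℕ} (hN1 : 1 ≤ N1)
    (ξ : ∀ p, Ω → (Fin N1 → X p))
    (hchain : IsMarkovApprox (S := fun p => Fin N1 → X p) P
      (Measure.pi fun _ : Fin N1 => η0)
      (fun k x => epsBootStep (fun a => M k a) (G k) (ε k) x) ξ)
    (n : ℕ) (f : X n → ℝ) (hf : Measurable f) (hfb : ∃ D, ∀ x, |f x| ≤ D) :
    (∫ ω, ((N1 : ℝ)⁻¹ * ∑ i, f (ξ n ω i)) *
        ∏ p ∈ Finset.range n, ((N1 : ℝ)⁻¹ * ∑ i, G p (ξ p ω i)) ∂P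
      = ∫ x, f x ∂(gammaSeq (S := X) η0 (fun k x => M k x) G n))
    ∧ (∫ ω, ((N1 : ℝ)⁻¹ * ∑ i, f (ξ n ω i)) *
          ∏ p ∈ Finset.range n, ((N1 : ℝ)⁻¹ * ∑ i, G p (ξ p ω i)) ∂P) /
        (∫ ω, ∏ p ∈ Finset.range n, ((N1 : ℝ)⁻¹ * ∑ i, G p (ξ p ω i)) ∂P)
      = ∫ x, f x ∂(etaSeq (S := X) η0 (fun k x => M k x) G n) := by
  obtain ⟨D, hb⟩ := hfb
  have hN : N1 ≠ 0 := by omega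
  have hΓ := integral_avg_mul_prod_avg_eq_integral_gammaSeq hN hGmeas hGpos hGle hε hεC hchain
    n hf hb
  have hΓ1 := integral_avg_mul_prod_avg_eq_integral_gammaSeq hN hGmeas hGpos hGle hε hεC hchain
    n (f := fun _ => 1) measurable_const (D := 1) fun _ => by norm_num
  simp only [sum_const, card_univ, Fintype.card_fin, nsmul_eq_mul, mul_one, ne_eq,
    Nat.cast_eq_zero, hN, not_false_eq_true, inv_mul_cancel₀, one_mul, integral_const,
    smul_eq_mul] at hΓ1
  refine ⟨hΓ, ?_⟩
  rw [hΓ, hΓ1, integral_etaSeq]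

/-- **Theorem 4.1.** For the island Feynman-Kac model built from the
ε-bootstrap particle transitions, the potentials `boldG_n(x) = N1⁻¹ Σ_i G_n(x^i)` and
initial law `η_0^{⊗N1}`, and for the lift `F(x) = N1⁻¹ Σ_i f(x^i)`:
`boldΓ_n(F) = γ_n(f)` and `boldη_n(F) = η_n(f)`. -/
theorem statement9 {X : ℕ → Type*} [∀ n, MeasurableSpace (X n)]
    (η0 : Measure (X 0)) [IsProbabilityMeasure η0]
    (M : ∀ n, Kernel (X n) (X (n + 1))) [∀ n, IsMarkovKernel (M n)]
    (G : ∀ n, X n → ℝ)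
    (hGmeas : ∀ n, Measurable (G n))
    (hGpos : ∀ n x, 0 < G n x)
    (C : ℕ → ℝ) (hGle : ∀ n x, G n x ≤ C n)
    (ε : ℕ → ℝ) (hε : ∀ n, 0 ≤ ε n) (hεC : ∀ n, ε n * C n ≤ 1)
    {Ω : Type*} [MeasurableSpace Ω] (P : Measure Ω) [IsProbabilityMeasure P]
    {N1 : ℕ} (hN1 : 1 ≤ N1)
    (ξ : ∀ p, Ω → (Fin N1 → X p))
    (hchain : IsMarkovApprox (S := fun p => Fin N1 → X p) P
      (Measure.pi fun _ : Fin N1 => η0)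
      (fun k x => epsBootStep (fun a => M k a) (G k) (ε k) x) ξ)
    (n : ℕ) (f : X n → ℝ) (hf : Measurable f) (hfb : ∃ D, ∀ x, |f x| ≤ D) :
    (∫ ω, ((N1 : ℝ)⁻¹ * ∑ i, f (ξ n ω i)) *
        ∏ p ∈ Finset.range n, ((N1 : ℝ)⁻¹ * ∑ i, G p (ξ p ω i)) ∂P
      = ∫ x, f x ∂(gammaSeq (S := X) η0 (fun k x => M k x) G n))
    ∧ (∫ ω, ((N1 : ℝ)⁻¹ * ∑ i, f (ξ n ω i)) *
          ∏ p ∈ Finset.range n, ((N1 : ℝ)⁻¹ * ∑ i, G p (ξ p ω i)) ∂P) /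
        (∫ ω, ∏ p ∈ Finset.range n, ((N1 : ℝ)⁻¹ * ∑ i, G p (ξ p ω i)) ∂P)
      = ∫ x, f x ∂(etaSeq (S := X) η0 (fun k x => M k x) G n) :=
  statement9_general η0 M G hGmeas hGpos C hGle ε hε hεC P hN1 ξ hchain n f hf hfb
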